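/- arXiv:math/0210472 — 6 statements merged into one kernel-verified Lean document; each statement's English description precedes it below -/
import Mathlib

section
/- For |z| < e, the integral ∫₀^∞ z e^{-u}/(1 - z u e^{-u}) du equals the power series ∑_{k=1}^∞ ((k-1)!/k^k) z^k. -/
/-!
Since `|u e^{-u}| ≤ 1/e`, for `|z| < e` the integrand expands pointwise as the geometric series
`∑ₙ z e^{-u} (z u e^{-u})ⁿ`, whose terms are dominated by `|z| (|z|/e)ⁿ e^{-u}`; this justifies
integrating term by term. The `n`-th term is `z^{n+1} uⁿ e^{-(n+1)u}`, and the Gamma integral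
`∫₀^∞ uⁿ e^{-(n+1)u} du = n!/(n+1)^{n+1}` gives the coefficients.
-/

open MeasureTheory Real Set

theorem integral_pow_mul_exp_neg_mul_Ioi (n : ℕ) {a : ℝ} (ha : 0 < a) :
    ∫ u in Ioi (0 : ℝ), u ^ n * exp (-(a * u)) = n.factorial / a ^ (n + 1) := by
  have h := integral_rpow_mul_exp_neg_mul_Ioi (a := n + 1) (by positivity) ha
  rw [add_sub_cancel_right, Gamma_nat_eq_factorial, one_div, inv_rpow ha.le,
    ← Nat.cast_add_one, rpow_natCast] at h
  rw [div_eq_inv_mul, ← h]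
  exact setIntegral_congr_fun measurableSet_Ioi fun u _ => by rw [rpow_natCast]

noncomputable def geomTerm (z : ℂ) (n : ℕ) (u : ℝ) : ℂ :=
  z * Complex.exp (-u) * (z * u * Complex.exp (-u)) ^ n

lemma norm_mul_mul_exp_neg_le (z : ℂ) {u : ℝ} (hu : 0 ≤ u) :
    ‖z * u * Complex.exp (-u)‖ ≤ ‖z‖ * exp (-1) := by
  rw [norm_mul, norm_mul, Complex.norm_exp, Complex.norm_real, Real.norm_of_nonneg hu, mul_assoc]
  exact mul_le_mul_of_nonneg_left (by simpa using mul_exp_neg_le_exp_neg_one u) (norm_nonneg z)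

lemma geomTerm_eq (z : ℂ) (n : ℕ) (u : ℝ) :
    geomTerm z n u = z ^ (n + 1) * ((u ^ n * exp (-((n + 1) * u)) : ℝ) : ℂ) := by
  rw [geomTerm, mul_pow, mul_pow]
  push_cast
  rw [show -((n + 1 : ℂ) * u) = (n + 1 : ℕ) * -(u : ℂ) by push_cast; ring, Complex.exp_nat_mul]
  ring

lemma norm_geomTerm_le (z : ℂ) (n : ℕ) {u : ℝ} (hu : 0 ≤ u) :
    ‖geomTerm z n u‖ ≤ ‖z‖ * (‖z‖ * exp (-1)) ^ n * exp (-u) := by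
  rw [geomTerm, norm_mul, norm_mul, norm_pow, Complex.norm_exp]
  simp only [Complex.neg_re, Complex.ofReal_re]
  rw [mul_right_comm ‖z‖ _ (exp (-u))]
  gcongr
  exact norm_mul_mul_exp_neg_le z hu

lemma ae_norm_geomTerm_le (z : ℂ) (n : ℕ) :
    ∀ᵐ u ∂volume.restrict (Ioi (0 : ℝ)),
      ‖geomTerm z n u‖ ≤ ‖z‖ * (‖z‖ * exp (-1)) ^ n * exp (-u) :=
  (ae_restrict_mem measurableSet_Ioi).mono fun _ hu => norm_geomTerm_le z n (le_of_lt hu)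

lemma integrableOn_geomTerm (z : ℂ) (n : ℕ) : IntegrableOn (geomTerm z n) (Ioi 0) :=
  Integrable.mono' ((integrableOn_exp_neg_Ioi 0).const_mul _) (by unfold geomTerm; fun_prop)
    (ae_norm_geomTerm_le z n)

lemma integral_norm_geomTerm_le (z : ℂ) (n : ℕ) :
    ∫ u in Ioi (0 : ℝ), ‖geomTerm z n u‖ ≤ ‖z‖ * (‖z‖ * exp (-1)) ^ n := by
  calc ∫ u in Ioi (0 : ℝ), ‖geomTerm z n u‖
      ≤ ∫ u in Ioi (0 : ℝ), ‖z‖ * (‖z‖ * exp (-1)) ^ n * exp (-u) :=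
        integral_mono_of_nonneg (.of_forall fun _ => norm_nonneg _)
          ((integrableOn_exp_neg_Ioi 0).const_mul _) (ae_norm_geomTerm_le z n)
    _ = ‖z‖ * (‖z‖ * exp (-1)) ^ n := by
        rw [integral_const_mul, integral_exp_neg_Ioi_zero, mul_one]

lemma integral_geomTerm (z : ℂ) (n : ℕ) :
    ∫ u in Ioi (0 : ℝ), geomTerm z n u = z ^ (n + 1) * (n.factorial / (n + 1 : ℂ) ^ (n + 1)) := by
  rw [setIntegral_congr_fun measurableSet_Ioi fun u _ => geomTerm_eq z n u, integral_const_mul,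
    integral_complex_ofReal, integral_pow_mul_exp_neg_mul_Ioi n (by positivity)]
  push_cast; rfl

/-- For `|z| < e`, the integral `∫₀^∞ z e^{-u}/(1 - z u e^{-u}) du` equals the
power series `∑_{k=1}^∞ ((k-1)!/k^k) z^k` (written with index shift `k = n+1`). -/
theorem integral_eq_tsum_factorial_series (z : ℂ) (hz : ‖z‖ < Real.exp 1) :
    ∫ u in Set.Ioi (0:ℝ), z * Complex.exp (-u) / (1 - z * u * Complex.exp (-u)) =
      ∑' n : ℕ, ((n.factorial : ℂ) / ((n + 1 : ℕ) : ℂ) ^ (n + 1)) * z ^ (n + 1) := by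
  have hq : ‖z‖ * exp (-1) < 1 := by
    rwa [exp_neg, mul_inv_lt_iff₀ (exp_pos 1), one_mul]
  have hexpand : EqOn (fun u : ℝ => z * Complex.exp (-u) / (1 - z * u * Complex.exp (-u)))
      (fun u => ∑' n, geomTerm z n u) (Ioi 0) := fun u hu => by
    simp only [geomTerm, tsum_mul_left, tsum_geometric_of_norm_lt_one
      ((norm_mul_mul_exp_neg_le z (le_of_lt hu)).trans_lt hq), div_eq_mul_inv]
  have hsummable : Summable fun n => ∫ u in Ioi (0 : ℝ), ‖geomTerm z n u‖ :=
    ((summable_geometric_of_lt_one (by positivity) hq).mul_left ‖z‖).of_nonneg_of_le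
      (fun _ => integral_nonneg fun _ => norm_nonneg _) (integral_norm_geomTerm_le z)
  rw [setIntegral_congr_fun measurableSet_Ioi hexpand,
    ← integral_tsum_of_summable_integral_norm (integrableOn_geomTerm z) hsummable]
  refine tsum_congr fun n => ?_
  rw [integral_geomTerm]
  push_cast
  ring
end

section
/- There is no constant C such that for all k ≥ 1, the 2-adic absolute value of (k-1)!/k^k is at most e^{Ck}. Consequently, the power series ∑_{k≥1} ((k-1)!/k^k) z^k fails the Sibuya–Sperber necessary condition (with p = 2) for satisfying an algebraic differential equation. -/
-- auxiliary: 2-adic valuation of m! is at most m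
lemma padicValNat_factorial_le_self (m : ℕ) : padicValNat 2 (Nat.factorial m) ≤ m := by
  have h := sub_one_mul_padicValNat_factorial (p := 2) m
  simpa using h.le.trans (Nat.sub_le _ _)

lemma norm_lower_bound (n : ℕ) (hn : 1 ≤ n) :
    (2 : ℚ) ^ ((n - 1 : ℕ) * 2 ^ n) ≤
      padicNorm 2 ((Nat.factorial (2 ^ n - 1) : ℚ) / ((2 ^ n : ℚ) ^ (2 ^ n))) := by
  have hk : (1 : ℕ) ≤ 2 ^ n := Nat.one_le_two_pow
  set w := padicValNat 2 (Nat.factorial (2 ^ n - 1)) with hw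
  have hwle : w ≤ 2 ^ n := (padicValNat_factorial_le_self _).trans (Nat.sub_le _ _)
  have ha : (Nat.factorial (2 ^ n - 1) : ℚ) ≠ 0 := by
    exact_mod_cast (Nat.factorial_ne_zero _)
  have hb : ((2 ^ n : ℚ) ^ (2 ^ n)) = ((2 ^ (n * 2 ^ n) : ℕ) : ℚ) := by
    push_cast
    rw [← pow_mul]
  have hbne : ((2 ^ n : ℚ) ^ (2 ^ n)) ≠ 0 := by positivity
  have hq : (Nat.factorial (2 ^ n - 1) : ℚ) / ((2 ^ n : ℚ) ^ (2 ^ n)) ≠ 0 :=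
    div_ne_zero ha hbne
  have hval : padicValRat 2 ((Nat.factorial (2 ^ n - 1) : ℚ) / ((2 ^ n : ℚ) ^ (2 ^ n)))
      = (w : ℤ) - (n * 2 ^ n : ℕ) := by
    rw [padicValRat.div ha hbne, hb, padicValRat.of_nat, padicValRat.of_nat,
      padicValNat.prime_pow]
  rw [padicNorm.eq_zpow_of_nonzero hq, hval]
  rw [neg_sub]
  calc (2 : ℚ) ^ ((n - 1 : ℕ) * 2 ^ n) = (2 : ℚ) ^ (((n - 1 : ℕ) * 2 ^ n : ℕ) : ℤ) := by
        rw [zpow_natCast]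
    _ ≤ (2 : ℚ) ^ ((n * 2 ^ n : ℕ) - (w : ℤ)) := by
        apply zpow_le_zpow_right₀ (by norm_num)
        have : ((n - 1 : ℕ) * 2 ^ n : ℕ) + w ≤ n * 2 ^ n := by
          calc ((n - 1 : ℕ) * 2 ^ n : ℕ) + w ≤ (n - 1) * 2 ^ n + 2 ^ n :=
                Nat.add_le_add_left hwle _
            _ = (n - 1 + 1) * 2 ^ n := by ring
            _ ≤ n * 2 ^ n := Nat.mul_le_mul_right _ (by omega : n - 1 + 1 ≤ n)
        exact le_sub_iff_add_le.mpr (by exact_mod_cast this)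

/-- There is no constant `C` such that for all `k ≥ 1` the 2-adic absolute value
of `(k-1)!/k^k` is at most `e^{Ck}`: the coefficients of
`∑_{k≥1} ((k-1)!/k^k) z^k` violate the Sibuya–Sperber necessary condition
(with `p = 2`) for satisfying an algebraic differential equation. -/
theorem no_sibuya_sperber_bound :
    ¬ ∃ C : ℝ, ∀ k : ℕ, 1 ≤ k →
      ((padicNorm 2 ((Nat.factorial (k - 1) : ℚ) / ((k : ℚ) ^ k)) : ℚ) : ℝ) ≤
        Real.exp (C * k) := by
  rintro ⟨C, hC⟩
  obtain ⟨N, hN⟩ := exists_nat_gt (C / Real.log 2)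
  set n := N + 1 with hn
  have hk1 : (1 : ℕ) ≤ 2 ^ n := Nat.one_le_two_pow
  have h1 := hC (2 ^ n) hk1
  have h2 : ((2 : ℝ) ^ ((n - 1 : ℕ) * 2 ^ n)) ≤ Real.exp (C * 2 ^ n) := by
    refine le_trans ?_ (by exact_mod_cast h1)
    have := norm_lower_bound n (by omega)
    calc ((2 : ℝ) ^ ((n - 1 : ℕ) * 2 ^ n)) = (((2 : ℚ) ^ ((n - 1 : ℕ) * 2 ^ n) : ℚ) : ℝ) := by
          push_cast; ring
      _ ≤ _ := by exact_mod_cast this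
  -- take logs
  have hlog2 : (0 : ℝ) < Real.log 2 := Real.log_pos (by norm_num)
  have h3 : (((n - 1 : ℕ) * 2 ^ n : ℕ) : ℝ) * Real.log 2 ≤ C * 2 ^ n := by
    have := Real.log_le_log (by positivity) h2
    rwa [Real.log_pow, Real.log_exp] at this
  have hn1 : (n - 1 : ℕ) = N := by omega
  rw [hn1] at h3
  have hpow : (0 : ℝ) < (2 : ℝ) ^ n := by positivity
  have h4 : (N : ℝ) * Real.log 2 ≤ C := by
    have : (N : ℝ) * Real.log 2 * 2 ^ n ≤ C * 2 ^ n := by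
      calc (N : ℝ) * Real.log 2 * 2 ^ n = ((N * 2 ^ n : ℕ) : ℝ) * Real.log 2 := by
            push_cast; ring
        _ ≤ C * 2 ^ n := h3
    exact le_of_mul_le_mul_right this hpow
  have h5 : C < (N : ℝ) * Real.log 2 := by
    rw [div_lt_iff₀ hlog2] at hN; linarith
  linarith
end

section
/- The function H(c) = ∫₀^∞ du/(c e^u − u) is strictly decreasing on (1/e, ∞), with H(c) → +∞ as c → (1/e)+ and H(c) → 0 as c → +∞. -/
/-!
Since `u ≤ e^{u-1}`, the denominator satisfies `c e^u - u ≥ (c - 1/e) e^u`, which gives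
integrability and `0 ≤ H(c) ≤ 1/(c - 1/e)`; strict monotonicity holds pointwise in the integrand.
For the blow-up write `ε = c - 1/e`: near `u = 1` the denominator `ε e^u + (e^{u-1} - u)` is at
most `e² ε + (u - 1)²`, so the integral over `[1, 1 + √ε]` alone is of order `1/√ε`.
-/

open MeasureTheory Real Filter Set Topology

theorem setIntegral_lt_setIntegral_of_forall_lt {X : Type*} [MeasurableSpace X] {μ : Measure X}
    {s : Set X} {f g : X → ℝ} (hs : MeasurableSet s) (hμs : μ s ≠ 0)
    (hf : IntegrableOn f s μ) (hg : IntegrableOn g s μ) (hlt : ∀ x ∈ s, f x < g x) :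
    ∫ x in s, f x ∂μ < ∫ x in s, g x ∂μ := by
  have hpos : ∀ x ∈ s, 0 < g x - f x := fun x hx => sub_pos.2 (hlt x hx)
  have hsupp : s ⊆ Function.support fun x => g x - f x := fun x hx => (hpos x hx).ne'
  rw [← sub_pos, ← integral_sub hg hf, integral_pos_iff_support_of_nonneg_ae
    ((ae_restrict_iff' hs).2 (Eventually.of_forall fun x hx => (hpos x hx).le)) (hg.sub hf),
    Measure.restrict_apply' hs, inter_eq_right.2 hsupp]
  exact pos_iff_ne_zero.2 hμs

noncomputable def H (c : ℝ) : ℝ := ∫ u in Ioi (0 : ℝ), (c * exp u - u)⁻¹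

theorem le_inv_exp_one_mul_exp (u : ℝ) : u ≤ (exp 1)⁻¹ * exp u := by
  rw [inv_mul_eq_div, ← exp_sub]
  linarith [add_one_le_exp (u - 1)]

theorem sub_inv_exp_one_mul_exp_le (c u : ℝ) : (c - (exp 1)⁻¹) * exp u ≤ c * exp u - u := by
  linarith [le_inv_exp_one_mul_exp u]

theorem mul_exp_sub_pos {c : ℝ} (hc : (exp 1)⁻¹ < c) (u : ℝ) : 0 < c * exp u - u :=
  (mul_pos (sub_pos.2 hc) (exp_pos u)).trans_le (sub_inv_exp_one_mul_exp_le c u)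

theorem inv_mul_exp_sub_le {c : ℝ} (hc : (exp 1)⁻¹ < c) (u : ℝ) :
    (c * exp u - u)⁻¹ ≤ (c - (exp 1)⁻¹)⁻¹ * exp (-u) := by
  rw [exp_neg, ← mul_inv]
  exact inv_anti₀ (mul_pos (sub_pos.2 hc) (exp_pos u)) (sub_inv_exp_one_mul_exp_le c u)

theorem integrableOn_inv_mul_exp_sub {c : ℝ} (hc : (exp 1)⁻¹ < c) :
    IntegrableOn (fun u : ℝ => (c * exp u - u)⁻¹) (Ioi 0) := by
  have hcont : Continuous (fun u : ℝ => (c * exp u - u)⁻¹) :=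
    ((continuous_const.mul continuous_exp).sub continuous_id).inv₀ fun u => (mul_exp_sub_pos hc u).ne'
  refine ((integrableOn_exp_neg_Ioi 0).const_mul (c - (exp 1)⁻¹)⁻¹).mono' hcont.aestronglyMeasurable.restrict ?_
  refine (ae_restrict_iff' measurableSet_Ioi).2 (Eventually.of_forall fun u _ => ?_)
  rw [norm_of_nonneg (inv_nonneg.2 (mul_exp_sub_pos hc u).le)]
  exact inv_mul_exp_sub_le hc u

theorem H_nonneg {c : ℝ} (hc : (exp 1)⁻¹ < c) : 0 ≤ H c :=
  setIntegral_nonneg measurableSet_Ioi fun u _ => inv_nonneg.2 (mul_exp_sub_pos hc u).le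

theorem H_le_inv_sub {c : ℝ} (hc : (exp 1)⁻¹ < c) : H c ≤ (c - (exp 1)⁻¹)⁻¹ := by
  calc H c ≤ ∫ u in Ioi (0 : ℝ), (c - (exp 1)⁻¹)⁻¹ * exp (-u) :=
        setIntegral_mono_on (integrableOn_inv_mul_exp_sub hc)
          ((integrableOn_exp_neg_Ioi 0).const_mul _) measurableSet_Ioi
          fun u _ => inv_mul_exp_sub_le hc u
    _ = (c - (exp 1)⁻¹)⁻¹ := by rw [integral_const_mul, integral_exp_neg_Ioi_zero, mul_one]

theorem H_strictAntiOn : StrictAntiOn H (Ioi (exp 1)⁻¹) := by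
  intro c₁ hc₁ c₂ hc₂ hlt
  refine setIntegral_lt_setIntegral_of_forall_lt measurableSet_Ioi (by simp)
    (integrableOn_inv_mul_exp_sub hc₂) (integrableOn_inv_mul_exp_sub hc₁) fun u _ => ?_
  refine inv_strictAnti₀ (mul_exp_sub_pos hc₁ u) ?_
  gcongr

theorem exp_sub_one_sub_le_sq {u : ℝ} (hu : |u - 1| ≤ 1) : exp (u - 1) - u ≤ (u - 1) ^ 2 := by
  linarith [(abs_le.1 (abs_exp_sub_one_sub_id_le hu)).2]

theorem mul_exp_sub_le_of_mem_Icc {c δ : ℝ} (hc : (exp 1)⁻¹ ≤ c) (hδ : δ ≤ 1) {u : ℝ}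
    (hu : u ∈ Icc 1 (1 + δ)) : c * exp u - u ≤ exp 2 * (c - (exp 1)⁻¹) + δ ^ 2 := by
  obtain ⟨hu₁, hu₂⟩ := hu
  have hlin : (c - (exp 1)⁻¹) * exp u ≤ (c - (exp 1)⁻¹) * exp 2 :=
    mul_le_mul_of_nonneg_left (exp_le_exp.2 (by linarith)) (sub_nonneg.2 hc)
  have hquad : exp (u - 1) - u ≤ δ ^ 2 :=
    calc exp (u - 1) - u ≤ (u - 1) ^ 2 :=
          exp_sub_one_sub_le_sq (abs_le.2 ⟨by linarith, by linarith⟩)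
      _ ≤ δ ^ 2 := pow_le_pow_left₀ (by linarith) (by linarith) 2
  have hsplit : c * exp u - u = (c - (exp 1)⁻¹) * exp u + (exp (u - 1) - u) := by
    rw [exp_sub]; ring
  linarith

theorem div_le_H {c δ : ℝ} (hc : (exp 1)⁻¹ < c) (hδ₀ : 0 < δ) (hδ₁ : δ ≤ 1) :
    δ / (exp 2 * (c - (exp 1)⁻¹) + δ ^ 2) ≤ H c := by
  have hsub : Ioc 1 (1 + δ) ⊆ Ioi (0 : ℝ) := fun u hu => one_pos.trans hu.1
  have hint := integrableOn_inv_mul_exp_sub hc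
  calc δ / (exp 2 * (c - (exp 1)⁻¹) + δ ^ 2)
      = ∫ _ in Ioc 1 (1 + δ), (exp 2 * (c - (exp 1)⁻¹) + δ ^ 2)⁻¹ := by
        rw [setIntegral_const, volume_real_Ioc, smul_eq_mul, add_sub_cancel_left,
          max_eq_left hδ₀.le, div_eq_mul_inv]
    _ ≤ ∫ u in Ioc 1 (1 + δ), (c * exp u - u)⁻¹ :=
        setIntegral_mono_on (integrableOn_const measure_Ioc_lt_top.ne) (hint.mono_set hsub)
          measurableSet_Ioc fun u hu => inv_anti₀ (mul_exp_sub_pos hc u)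
            (mul_exp_sub_le_of_mem_Icc hc.le hδ₁ (Ioc_subset_Icc_self hu))
    _ ≤ H c := setIntegral_mono_set hint
        (Eventually.of_forall fun u => inv_nonneg.2 (mul_exp_sub_pos hc u).le) hsub.eventuallyLE

theorem inv_mul_sqrt_le_H {c : ℝ} (hc : (exp 1)⁻¹ < c) (hc₁ : c ≤ (exp 1)⁻¹ + 1) :
    ((exp 2 + 1) * √(c - (exp 1)⁻¹))⁻¹ ≤ H c := by
  have hε : 0 < c - (exp 1)⁻¹ := sub_pos.2 hc
  have hs : 0 < √(c - (exp 1)⁻¹) := sqrt_pos.2 hε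
  convert div_le_H hc hs (sqrt_le_one.2 (by linarith)) using 1
  have hdiv : ∀ s : ℝ, 0 < s → s / (exp 2 * s ^ 2 + s ^ 2) = ((exp 2 + 1) * s)⁻¹ :=
    fun s hs => by field_simp
  rw [← hdiv _ hs, sq_sqrt hε.le]

theorem tendsto_H_nhdsGT : Tendsto H (𝓝[>] (exp 1)⁻¹) atTop := by
  have hlim : Tendsto (fun c => (exp 2 + 1) * √(c - (exp 1)⁻¹)) (𝓝[>] (exp 1)⁻¹) (𝓝[>] 0) := by
    refine tendsto_nhdsWithin_iff.2 ⟨?_, ?_⟩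
    · refine (Continuous.tendsto' (by fun_prop) _ _ ?_).mono_left nhdsWithin_le_nhds
      simp
    · filter_upwards [self_mem_nhdsWithin] with c (hc : _ < c)
      exact mul_pos (by positivity) (sqrt_pos.2 (sub_pos.2 hc))
  refine tendsto_atTop_mono' _ ?_ (tendsto_inv_nhdsGT_zero.comp hlim)
  filter_upwards [Ioc_mem_nhdsGT (lt_add_one _)] with c hc using inv_mul_sqrt_le_H hc.1 hc.2

theorem tendsto_H_atTop : Tendsto H atTop (𝓝 0) := by
  have hbound : Tendsto (fun c : ℝ => (c - (exp 1)⁻¹)⁻¹) atTop (𝓝 0) :=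
    tendsto_inv_atTop_zero.comp (tendsto_atTop_add_const_right _ _ tendsto_id)
  refine tendsto_of_tendsto_of_tendsto_of_le_of_le' tendsto_const_nhds hbound ?_ ?_ <;>
    filter_upwards [eventually_gt_atTop (exp 1)⁻¹] with c hc
  exacts [H_nonneg hc, H_le_inv_sub hc]

/-- `H(c) = ∫₀^∞ du/(c e^u − u)` is strictly decreasing on `(1/e, ∞)`, with
`H(c) → +∞` as `c → (1/e)+` and `H(c) → 0` as `c → +∞`. -/
theorem H_right_branch :
    StrictAntiOn (fun c : ℝ => ∫ u in Set.Ioi (0:ℝ), (c * Real.exp u - u)⁻¹)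
      (Set.Ioi (Real.exp 1)⁻¹) ∧
    Tendsto (fun c : ℝ => ∫ u in Set.Ioi (0:ℝ), (c * Real.exp u - u)⁻¹)
      (nhdsWithin (Real.exp 1)⁻¹ (Set.Ioi (Real.exp 1)⁻¹)) atTop ∧
    Tendsto (fun c : ℝ => ∫ u in Set.Ioi (0:ℝ), (c * Real.exp u - u)⁻¹)
      atTop (nhds 0) :=
  ⟨H_strictAntiOn, tendsto_H_nhdsGT, tendsto_H_atTop⟩
end

section
/- For real c with 0 < c ≤ 1/e, let s*(c) be the smallest solution of s e^{-s} = c. Then F(s, c) = ∫₀^s du/(c e^u − u) is strictly increasing in s on (−∞, s*(c)), with F(s, c) → −∞ as s → −∞ and F(s, c) → +∞ as s → s*(c)−. -/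
open MeasureTheory Real Filter Set Topology

/-!
Write `g u = c e^u - u`. Since `g 0 = c > 0`, a zero of `g` in `(0, s*)` would be a root of
`s e^{-s} = c` below `s*`, so `g > 0` on `(-∞, s*)` and `F' = 1/g > 0` there. As `s → -∞`, the
bound `g u ≤ c - u` for `u ≤ 0` gives `F(s) ≤ log c - log (c - s)`. Near `s*`, convexity of `g`
together with `g 0 = c`, `g s* = 0` gives the chord bound `g u ≤ (c / s*) (s* - u)` on `[0, s*]`,
hence `F(s) ≥ (s* / c) (log s* - log (s* - s))`.
-/

theorem intervalIntegrable_inv_of_pos {f : ℝ → ℝ} {a b : ℝ} (hf : Continuous f)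
    (hpos : ∀ u ∈ uIcc a b, 0 < f u) : IntervalIntegrable (fun u => (f u)⁻¹) volume a b :=
  (hf.continuousOn.inv₀ fun u hu => (hpos u hu).ne').intervalIntegrable

theorem integral_inv_const_sub {k a b : ℝ} (ha : a < k) (hb : b < k) :
    ∫ u in a..b, (k - u)⁻¹ = log (k - a) - log (k - b) := by
  rw [intervalIntegral.integral_comp_sub_left (fun x => x⁻¹),
    integral_inv_of_pos (sub_pos.2 hb) (sub_pos.2 ha), log_div (sub_pos.2 ha).ne' (sub_pos.2 hb).ne']

theorem tendsto_log_const_sub_atBot (k : ℝ) : Tendsto (fun s => log (k - s)) atBot atTop :=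
  tendsto_log_atTop.comp <|
    (tendsto_atTop_add_const_left atBot k tendsto_neg_atBot_atTop).congr fun s => by
      simp [sub_eq_add_neg]

theorem tendsto_log_const_sub_nhdsLT (k : ℝ) : Tendsto (fun s => log (k - s)) (𝓝[<] k) atBot := by
  have hmaps : MapsTo (k - ·) (Iio k) (Ioi 0) := fun _ hs => mem_Ioi.2 (sub_pos.2 hs)
  have hsub := (continuous_sub_left k).continuousWithinAt.tendsto_nhdsWithin (x := k) hmaps
  rw [sub_self] at hsub
  exact tendsto_log_nhdsGT_zero.comp hsub

theorem strictMonoOn_integral_of_pos {f : ℝ → ℝ} {a b : ℝ} (ha : a < b)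
    (hf : ContinuousOn f (Iio b)) (hpos : ∀ u < b, 0 < f u) :
    StrictMonoOn (fun s => ∫ u in a..s, f u) (Iio b) := by
  have hint : ∀ {p q : ℝ}, p < b → q < b → IntervalIntegrable f volume p q := fun hp hq =>
    (hf.mono fun u hu => hu.2.trans_lt (max_lt hp hq)).intervalIntegrable
  intro x hx y hy hxy
  dsimp only
  rw [← intervalIntegral.integral_add_adjacent_intervals (hint ha hx) (hint hx hy)]
  exact lt_add_of_pos_right _ <| intervalIntegral.intervalIntegral_pos_of_pos_on (hint hx hy)
    (fun u hu => hpos u (hu.2.trans hy)) hxy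

section

variable {c s₀ : ℝ}

theorem pos_of_mul_exp_neg_eq (hc : 0 < c) (h : s₀ * exp (-s₀) = c) : 0 < s₀ :=
  (pos_iff_pos_of_mul_pos (h ▸ hc)).2 (exp_pos _)

theorem mul_exp_eq_self_of_mul_exp_neg_eq (h : s₀ * exp (-s₀) = c) : c * exp s₀ = s₀ := by
  rw [← h, mul_assoc, ← exp_add, neg_add_cancel, exp_zero, mul_one]

theorem mul_exp_sub_pos_of_nonpos (hc : 0 < c) {u : ℝ} (hu : u ≤ 0) : 0 < c * exp u - u := by
  linarith [mul_pos hc (exp_pos u)]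

theorem mul_exp_sub_pos_of_lt (hc : 0 < c) (hmin : ∀ s, s * exp (-s) = c → s₀ ≤ s) {u : ℝ}
    (hu : u < s₀) : 0 < c * exp u - u := by
  rcases le_or_gt u 0 with hu0 | hu0
  · exact mul_exp_sub_pos_of_nonpos hc hu0
  by_contra! hle
  obtain ⟨t, ht, hgt⟩ := intermediate_value_Icc' hu0.le
    (by fun_prop : ContinuousOn (fun t => c * exp t - t) (Icc 0 u)) ⟨hle, by simp [hc.le]⟩
  have hroot : t * exp (-t) = c := by
    rw [exp_neg]
    field_simp
    linarith
  linarith [hmin t hroot, ht.2]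

theorem mul_exp_sub_le_of_mem_Icc_s12 (hc : 0 ≤ c) (hs₀ : 0 < s₀) (hfix : c * exp s₀ = s₀) {u : ℝ}
    (hu : u ∈ Icc 0 s₀) : c * exp u - u ≤ c / s₀ * (s₀ - u) := by
  have hexp := convexOn_exp.2 (mem_univ 0) (mem_univ s₀)
    (sub_nonneg.2 ((div_le_one hs₀).2 hu.2)) (div_nonneg hu.1 hs₀.le) (sub_add_cancel 1 (u / s₀))
  simp only [smul_eq_mul, mul_zero, zero_add, exp_zero, mul_one, div_mul_cancel₀ u hs₀.ne']
    at hexp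
  calc c * exp u - u ≤ c * (1 - u / s₀ + u / s₀ * exp s₀) - u := by gcongr
    _ = c * (1 - u / s₀) + u / s₀ * (c * exp s₀) - u := by ring
    _ = c / s₀ * (s₀ - u) := by
      rw [hfix]
      field_simp
      ring

theorem continuousOn_inv_mul_exp_sub (hc : 0 < c) (hmin : ∀ s, s * exp (-s) = c → s₀ ≤ s) :
    ContinuousOn (fun u => (c * exp u - u)⁻¹) (Iio s₀) :=
  ContinuousOn.inv₀ (by fun_prop) fun _ hu => (mul_exp_sub_pos_of_lt hc hmin hu).ne'

theorem tendsto_integral_inv_mul_exp_sub_atBot (hc : 0 < c) :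
    Tendsto (fun s => ∫ u in (0 : ℝ)..s, (c * exp u - u)⁻¹) atBot atBot := by
  have hbound : Tendsto (fun s => log c - log (c - s)) atBot atBot :=
    (tendsto_atBot_add_const_left atBot (log c)
      (tendsto_neg_atTop_atBot.comp (tendsto_log_const_sub_atBot c))).congr fun s => by
        simp [sub_eq_add_neg]
  refine tendsto_atBot_mono' _ ?_ hbound
  filter_upwards [eventually_le_atBot 0] with s hs
  have hcmp : ∫ u in s..0, (c - u)⁻¹ ≤ ∫ u in s..0, (c * exp u - u)⁻¹ := by
    refine intervalIntegral.integral_mono_on hs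
      (intervalIntegrable_inv_of_pos (by fun_prop) fun u hu => ?_)
      (intervalIntegrable_inv_of_pos (by fun_prop) fun u hu => ?_) fun u hu => ?_
    · rw [uIcc_of_le hs] at hu
      linarith [hu.2]
    · rw [uIcc_of_le hs] at hu
      exact mul_exp_sub_pos_of_nonpos hc hu.2
    · exact inv_anti₀ (mul_exp_sub_pos_of_nonpos hc hu.2)
        (by nlinarith [exp_le_one_iff.2 hu.2])
  rw [integral_inv_const_sub (by linarith) hc, sub_zero] at hcmp
  rw [intervalIntegral.integral_symm]
  linarith

theorem tendsto_integral_inv_mul_exp_sub_nhdsLT (hc : 0 < c) (hstar : s₀ * exp (-s₀) = c)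
    (hmin : ∀ s, s * exp (-s) = c → s₀ ≤ s) :
    Tendsto (fun s => ∫ u in (0 : ℝ)..s, (c * exp u - u)⁻¹) (𝓝[<] s₀) atTop := by
  have hs₀ := pos_of_mul_exp_neg_eq hc hstar
  have hbound : Tendsto (fun s => s₀ / c * (log s₀ - log (s₀ - s))) (𝓝[<] s₀) atTop :=
    ((tendsto_atTop_add_const_left _ (log s₀)
      (tendsto_neg_atBot_atTop.comp (tendsto_log_const_sub_nhdsLT s₀))).congr fun s => by
        simp [sub_eq_add_neg]).const_mul_atTop (by positivity)
  refine tendsto_atTop_mono' _ ?_ hbound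
  filter_upwards [Ioo_mem_nhdsLT hs₀] with s ⟨hs0, hs⟩
  have hg : ∀ u ∈ Icc 0 s, 0 < c * exp u - u := fun u hu =>
    mul_exp_sub_pos_of_lt hc hmin (hu.2.trans_lt hs)
  calc s₀ / c * (log s₀ - log (s₀ - s)) = ∫ u in (0 : ℝ)..s, s₀ / c * (s₀ - u)⁻¹ := by
        rw [intervalIntegral.integral_const_mul, integral_inv_const_sub hs₀ hs, sub_zero]
    _ ≤ ∫ u in (0 : ℝ)..s, (c * exp u - u)⁻¹ := by
      refine intervalIntegral.integral_mono_on hs0.le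
        ((intervalIntegrable_inv_of_pos (by fun_prop) fun u hu => ?_).const_mul _)
        (intervalIntegrable_inv_of_pos (by fun_prop) fun u hu => ?_) fun u hu => ?_
      · rw [uIcc_of_le hs0.le] at hu
        linarith [hu.2]
      · rw [uIcc_of_le hs0.le] at hu
        exact hg u hu
      · calc s₀ / c * (s₀ - u)⁻¹ = (c / s₀ * (s₀ - u))⁻¹ := by rw [mul_inv, inv_div]
          _ ≤ (c * exp u - u)⁻¹ := inv_anti₀ (hg u hu) <|
            mul_exp_sub_le_of_mem_Icc_s12 hc.le hs₀ (mul_exp_eq_self_of_mul_exp_neg_eq hstar)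
              ⟨hu.1, hu.2.trans hs.le⟩

end

theorem F_middle_branch_general (c sstar : ℝ) (hc0 : 0 < c)
    (hstar : sstar * Real.exp (-sstar) = c)
    (hmin : ∀ s : ℝ, s * Real.exp (-s) = c → sstar ≤ s) :
    StrictMonoOn (fun s : ℝ => ∫ u in (0:ℝ)..s, (c * Real.exp u - u)⁻¹)
      (Set.Iio sstar) ∧
    Tendsto (fun s : ℝ => ∫ u in (0:ℝ)..s, (c * Real.exp u - u)⁻¹) atBot atBot ∧
    Tendsto (fun s : ℝ => ∫ u in (0:ℝ)..s, (c * Real.exp u - u)⁻¹)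
      (nhdsWithin sstar (Set.Iio sstar)) atTop :=
  ⟨strictMonoOn_integral_of_pos (pos_of_mul_exp_neg_eq hc0 hstar)
      (continuousOn_inv_mul_exp_sub hc0 hmin)
      fun _ hu => inv_pos.2 (mul_exp_sub_pos_of_lt hc0 hmin hu),
    tendsto_integral_inv_mul_exp_sub_atBot hc0,
    tendsto_integral_inv_mul_exp_sub_nhdsLT hc0 hstar hmin⟩

/-- For `0 < c ≤ 1/e`, with `s*` the smallest solution of `s e^{-s} = c`:
`s ↦ F(s,c) = ∫₀^s du/(c e^u − u)` is strictly increasing on `(−∞, s*)`, tends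
to `−∞` as `s → −∞`, and tends to `+∞` as `s → s*−`. -/
theorem F_middle_branch (c sstar : ℝ) (hc0 : 0 < c) (hc1 : c ≤ (Real.exp 1)⁻¹)
    (hstar : sstar * Real.exp (-sstar) = c)
    (hmin : ∀ s : ℝ, s * Real.exp (-s) = c → sstar ≤ s) :
    StrictMonoOn (fun s : ℝ => ∫ u in (0:ℝ)..s, (c * Real.exp u - u)⁻¹)
      (Set.Iio sstar) ∧
    Tendsto (fun s : ℝ => ∫ u in (0:ℝ)..s, (c * Real.exp u - u)⁻¹) atBot atBot ∧
    Tendsto (fun s : ℝ => ∫ u in (0:ℝ)..s, (c * Real.exp u - u)⁻¹)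
      (nhdsWithin sstar (Set.Iio sstar)) atTop :=
  F_middle_branch_general c sstar hc0 hstar hmin
end

section
/- Let Ω ⊆ ℝ^p × ℝ be open and connected, and F : Ω → ℝ real-analytic. Fix a polynomial Q with integer coefficients in n+2 variables, and let Ω'(Q) be the set of u such that Q(v, F(u,v), ∂_v F(u,v), ..., ∂_v^n F(u,v)) = 0 for all v with (u,v) ∈ Ω. If Ω'(Q) has positive Lebesgue measure in ℝ^p, then Q(v, F(u,v), ∂_v F(u,v), ..., ∂_v^n F(u,v)) = 0 for all (u,v) ∈ Ω. -/
/-!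
The left-hand side `G(u, v)` of the differential relation is real-analytic on `Ω`, because
`v`-derivatives of an analytic function are analytic. Its zero set in `Ω` contains
`{u} × Ω_u` for every `u ∈ Ω'(Q)`, where the slices `Ω_u` are open and nonempty, so by Fubini
it has positive measure. Almost every point of a set is a Lebesgue density point, and at a
density point the tangent cone is the whole space; hence at such a point of the zero set all
derivatives of `G` vanish, `G` vanishes nearby, and by the identity theorem it vanishes on the
connected set `Ω`.
-/

open MeasureTheory Metric Set Filter Topology

section Density

variable {E : Type*} [NormedAddCommGroup E] [NormedSpace ℝ E] [FiniteDimensional ℝ E]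
  [MeasurableSpace E] [BorelSpace E] (μ : Measure E) [μ.IsAddHaarMeasure]

theorem tangentConeAt_eq_univ_of_tendsto_density_one {s : Set E} {x : E}
    (h : Tendsto (fun r => μ (s ∩ closedBall x r) / μ (closedBall x r)) (𝓝[>] 0) (𝓝 1)) :
    tangentConeAt ℝ s x = univ := by
  refine eq_univ_of_forall fun v => ?_
  refine mem_tangentConeAt_of_frequently (𝓝[>] (0 : ℝ) ×ˢ 𝓝 v) (fun q => q.1⁻¹)
    (fun q => q.1 • q.2) ?_ ?_ ?_
  · simpa using (tendsto_nhdsWithin_iff.1 tendsto_fst).1.smul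
      (tendsto_snd (f := 𝓝[>] (0 : ℝ)) (g := 𝓝 v))
  · rw [Filter.Frequently, Filter.eventually_prod_iff]
    rintro ⟨pr, hpr, pw, hpw, hnot⟩
    obtain ⟨ε, hε, hball⟩ := Metric.mem_nhds_iff.1 hpw
    obtain ⟨r, ⟨z, hzs, hz⟩, hr⟩ :=
      ((Measure.eventually_nonempty_inter_smul_of_density_one μ s x h (ball v ε)
        measurableSet_ball (measure_ball_pos μ v hε).ne').and hpr).exists
    simp only [singleton_add, image_add_left, mem_preimage] at hz
    obtain ⟨w, hw, hwz⟩ := hz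
    refine hnot hr (hball hw) ?_
    simp only at hwz ⊢
    rwa [hwz, add_neg_cancel_left]
  · refine tendsto_snd.congr' ?_
    filter_upwards [prod_mem_prod self_mem_nhdsWithin univ_mem] with q hq
    exact (inv_smul_smul₀ hq.1.ne' q.2).symm

theorem uniqueDiffWithinAt_of_tendsto_density_one {s : Set E} {x : E}
    (h : Tendsto (fun r => μ (s ∩ closedBall x r) / μ (closedBall x r)) (𝓝[>] 0) (𝓝 1)) :
    UniqueDiffWithinAt ℝ s x := by
  have hcone := tangentConeAt_eq_univ_of_tendsto_density_one μ h
  refine ⟨?_, mem_closure_of_nonempty_tangentConeAt (hcone ▸ univ_nonempty)⟩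
  simp [hcone, dense_univ]

theorem exists_subset_ae_eq_uniqueDiffOn (s : Set E) :
    ∃ t ⊆ s, t =ᵐ[μ] s ∧ UniqueDiffOn ℝ t := by
  set t := {x ∈ s |
    Tendsto (fun r => μ (s ∩ closedBall x r) / μ (closedBall x r)) (𝓝[>] 0) (𝓝 1)}
  have hts : t =ᵐ[μ] s := by
    have hdiff : s \ t = {x | ¬Tendsto (fun r => μ (s ∩ closedBall x r) / μ (closedBall x r))
        (𝓝[>] 0) (𝓝 1)} ∩ s := by
      ext x; simp [t, and_comm]
    refine ae_eq_set.2 ⟨by rw [sdiff_eq_empty.2 (sep_subset _ _), measure_empty], ?_⟩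
    rw [hdiff, ← nonpos_iff_eq_zero]
    exact (Measure.le_restrict_apply _ _).trans_eq
      (ae_iff.1 (Besicovitch.ae_tendsto_measure_inter_div μ s))
  refine ⟨t, sep_subset _ _, hts, fun x hx => uniqueDiffWithinAt_of_tendsto_density_one μ ?_⟩
  convert hx.2 using 3 with r
  exact measure_congr (hts.inter (ae_eq_refl _))

end Density

theorem AnalyticAt.eventuallyEq_zero_of_iteratedFDeriv_eq_zero {𝕜 E F : Type*}
    [NontriviallyNormedField 𝕜] [CharZero 𝕜] [NormedAddCommGroup E] [NormedSpace 𝕜 E]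
    [NormedAddCommGroup F] [NormedSpace 𝕜 F] [CompleteSpace F] {f : E → F} {x : E}
    (hf : AnalyticAt 𝕜 f x) (h : ∀ n, iteratedFDeriv 𝕜 n f x = 0) : f =ᶠ[𝓝 x] 0 := by
  obtain ⟨p, r, hp⟩ := hf
  filter_upwards [Metric.eball_mem_nhds x hp.r_pos] with y hy
  have hsum :=
    hp.hasSum_iteratedFDeriv (y := y - x) (by simpa [edist_dist, dist_eq_norm] using hy)
  simp only [h, zero_apply, smul_zero, add_sub_cancel] at hsum
  exact hsum.unique hasSum_zero

theorem AnalyticOnNhd.eqOn_zero_of_measure_ne_zero {E F : Type*}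
    [NormedAddCommGroup E] [NormedSpace ℝ E] [FiniteDimensional ℝ E] [MeasurableSpace E]
    [BorelSpace E] (μ : Measure E) [μ.IsAddHaarMeasure]
    [NormedAddCommGroup F] [NormedSpace ℝ F] [CompleteSpace F] {f : E → F} {U : Set E}
    (hf : AnalyticOnNhd ℝ f U) (hU : IsPreconnected U) (h : μ {x ∈ U | f x = 0} ≠ 0) :
    EqOn f 0 U := by
  obtain ⟨t, hts, hμt, ht⟩ := exists_subset_ae_eq_uniqueDiffOn μ {x ∈ U | f x = 0}
  obtain ⟨x, hx⟩ := nonempty_of_measure_ne_zero (measure_congr hμt ▸ h)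
  have hxU : x ∈ U := (hts hx).1
  have hderiv (n : ℕ) : iteratedFDeriv ℝ n f x = 0 := by
    rw [← iteratedFDerivWithin_eq_iteratedFDeriv ht (hf x hxU).contDiffAt hx,
      iteratedFDerivWithin_congr (fun y hy => (hts hy).2) hx]
    simp
  exact hf.eqOn_zero_of_preconnected_of_eventuallyEq_zero hU hxU
    ((hf x hxU).eventuallyEq_zero_of_iteratedFDeriv_eq_zero hderiv)

section Slice

variable {𝕜 E F : Type*} [NontriviallyNormedField 𝕜] [NormedAddCommGroup E]
  [NormedSpace 𝕜 E] [NormedAddCommGroup F] [NormedSpace 𝕜 F] {Ω : Set (E × 𝕜)}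

theorem AnalyticOnNhd.deriv_snd {h : E × 𝕜 → F} (hΩ : IsOpen Ω)
    (hh : AnalyticOnNhd 𝕜 h Ω) :
    AnalyticOnNhd 𝕜 (fun x => deriv (fun w => h (x.1, w)) x.2) Ω := by
  refine ((ContinuousLinearMap.apply 𝕜 F ((0 : E), (1 : 𝕜))).comp_analyticOnNhd
    (hh.fderiv_of_isOpen hΩ)).congr hΩ fun x hx => ?_
  have hline : HasDerivAt (fun w => (x.1, w)) ((0 : E), (1 : 𝕜)) x.2 :=
    (hasDerivAt_const x.2 x.1).prodMk (hasDerivAt_id x.2)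
  exact (((hh x hx).differentiableAt.hasFDerivAt).comp_hasDerivAt x.2 hline).deriv.symm

theorem AnalyticOnNhd.iteratedDeriv_snd {h : E × 𝕜 → F} (hΩ : IsOpen Ω)
    (hh : AnalyticOnNhd 𝕜 h Ω) (k : ℕ) :
    AnalyticOnNhd 𝕜 (fun x => iteratedDeriv k (fun w => h (x.1, w)) x.2) Ω := by
  induction k with
  | zero => simpa using hh
  | succ k ih => simpa [iteratedDeriv_succ] using ih.deriv_snd hΩ

end Slice

theorem MeasureTheory.Measure.prod_ne_zero_of_interior_slice_nonempty {α β : Type*}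
    [MeasurableSpace α] [MeasurableSpace β] [TopologicalSpace β] {μ : Measure α}
    {ν : Measure β} [SFinite ν] [ν.IsOpenPosMeasure] {s : Set (α × β)} {A : Set α}
    (hA : μ A ≠ 0) (hslice : ∀ u ∈ A, (interior (Prod.mk u ⁻¹' s)).Nonempty) :
    μ.prod ν s ≠ 0 := by
  intro hs
  refine hA (measure_mono_null (fun u hu => ?_) (measure_ae_null_of_prod_null hs))
  exact ((isOpen_interior.measure_pos ν (hslice u hu)).trans_le
    (measure_mono interior_subset)).ne'

/-- If the set `Ω'(Q)` of parameters `u` for which `F(u,·)` satisfies the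
integer-coefficient differential polynomial equation `Q` on all admissible `v`
has positive measure, then the relation holds on all of the connected open
set `Ω`. -/
theorem alternative_lemma_positive_measure
    (p n : ℕ) (Ω : Set ((Fin p → ℝ) × ℝ)) (hΩo : IsOpen Ω) (hΩc : IsConnected Ω)
    (F : (Fin p → ℝ) × ℝ → ℝ) (hF : AnalyticOnNhd ℝ F Ω)
    (Q : MvPolynomial (Fin (n + 2)) ℤ)
    (hpos : 0 < volume {u : Fin p → ℝ |
      (∃ v : ℝ, (u, v) ∈ Ω) ∧ ∀ v : ℝ, (u, v) ∈ Ω →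
        MvPolynomial.aeval
          (fun i : Fin (n + 2) =>
            if (i : ℕ) = 0 then v
            else iteratedDeriv ((i : ℕ) - 1) (fun w => F (u, w)) v) Q = 0}) :
    ∀ u v, (u, v) ∈ Ω →
      MvPolynomial.aeval
        (fun i : Fin (n + 2) =>
          if (i : ℕ) = 0 then v
          else iteratedDeriv ((i : ℕ) - 1) (fun w => F (u, w)) v) Q = 0 := by
  set G : (Fin p → ℝ) × ℝ → ℝ := fun x => MvPolynomial.aeval (fun i : Fin (n + 2) =>
      if (i : ℕ) = 0 then x.2 else iteratedDeriv ((i : ℕ) - 1) (fun w => F (x.1, w)) x.2) Q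
  have hG : AnalyticOnNhd ℝ G Ω := by
    refine AnalyticOnNhd.aeval_mvPolynomial (fun i => ?_) Q
    split_ifs
    · exact analyticOnNhd_snd
    · exact hF.iteratedDeriv_snd hΩo _
  have hzero : (volume.prod volume) {x ∈ Ω | G x = 0} ≠ 0 := by
    refine Measure.prod_ne_zero_of_interior_slice_nonempty hpos.ne' ?_
    rintro u ⟨⟨v, hv⟩, hu⟩
    have hslice : {w | (u, w) ∈ Ω} ⊆ Prod.mk u ⁻¹' {x ∈ Ω | G x = 0} :=
      fun w hw => ⟨hw, hu w hw⟩
    exact ⟨v, interior_maximal hslice (hΩo.preimage (Continuous.prodMk_right u)) hv⟩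
  intro u v huv
  exact (hG.eqOn_zero_of_measure_ne_zero _ hΩc.isPreconnected hzero huv).trans (Pi.zero_apply _)
end

section
/- A real-analytic function g on a connected open subset Ω of ℝ^N that vanishes on a subset of Ω of positive Lebesgue measure vanishes identically on Ω. -/
/-!
Almost every point of a set of positive measure is a Lebesgue density point, so `g` vanishes on a
set `s` having density one at some `x₀ ∈ Ω`. Expand `g` at `x₀` into homogeneous polynomials
`q₀ + q₁ + ⋯` and suppose `q₀, …, qₙ₋₁` vanish. If `qₙ w ≠ 0`, then `|qₙ| > a > 0` on a bounded
open set `t ∋ w`; since `s` meets the rescaled copies `x₀ + r • t` for all small `r > 0`, this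
gives points `x₀ + r • u ∈ s` with `a rⁿ < |qₙ (r • u)| = |g (x₀ + r • u) - qₙ (r • u)| = O(rⁿ⁺¹)`,
which is absurd. Hence `g` vanishes near `x₀`, and on all of `Ω` by the identity theorem.
-/

open MeasureTheory Metric Filter Asymptotics Topology

def HasDensityOneAt {α : Type*} [PseudoMetricSpace α] [MeasurableSpace α] (μ : Measure α)
    (s : Set α) (x : α) : Prop :=
  Tendsto (fun r => μ (s ∩ closedBall x r) / μ (closedBall x r)) (𝓝[>] 0) (𝓝 1)

theorem exists_mem_hasDensityOneAt {β : Type*} [MetricSpace β] [MeasurableSpace β]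
    [BorelSpace β] [SecondCountableTopology β] [HasBesicovitchCovering β] (μ : Measure β)
    [IsLocallyFiniteMeasure μ] {s : Set β} (hs : μ s ≠ 0) : ∃ x ∈ s, HasDensityOneAt μ s x :=
  Measure.exists_mem_of_measure_ne_zero_of_ae hs (Besicovitch.ae_tendsto_measure_inter_div μ s)

section

variable {E F : Type*} [NormedAddCommGroup E] [NormedSpace ℝ E] [MeasurableSpace E]
  [BorelSpace E] [FiniteDimensional ℝ E] {μ : Measure E} [μ.IsAddHaarMeasure]
  [NormedAddCommGroup F] [NormedSpace ℝ F]

theorem HasDensityOneAt.continuousMultilinearMap_apply_eq_zero {s : Set E} {x : E}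
    (hs : HasDensityOneAt μ s x) {n : ℕ} {q : E [×n]→L[ℝ] F}
    (h : (fun y => q fun _ => y - x) =O[𝓝[s] x] fun y => ‖y - x‖ ^ (n + 1)) (w : E) :
    (q fun _ => w) = 0 := by
  by_contra hw
  set a := ‖q fun _ => w‖ / 2
  set R := ‖w‖ + 1
  set t := ball (0 : E) R ∩ {u | a < ‖q fun _ => u‖}
  have ht_open : IsOpen t := isOpen_ball.inter (isOpen_lt continuous_const (by fun_prop))
  have ha : 0 < a := half_pos (norm_pos_iff.2 hw)
  have hwt : w ∈ t := ⟨by simp [R], half_lt_self (norm_pos_iff.2 hw)⟩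
  clear_value a R
  obtain ⟨C, hC, hCb⟩ := h.exists_pos
  obtain ⟨ε, hε, hbound⟩ := Metric.eventually_nhds_iff.1
    (eventually_nhdsWithin_iff.1 hCb.bound)
  have hr : Tendsto (fun r : ℝ => r) (𝓝[>] 0) (𝓝 0) := nhdsWithin_le_nhds
  obtain ⟨r, ⟨y, hys, hyt⟩, hrε, hra, hr_mem⟩ :=
    ((Measure.eventually_nonempty_inter_smul_of_density_one μ s x hs t ht_open.measurableSet
      (ht_open.measure_pos μ ⟨w, hwt⟩).ne').and <|
      ((hr.mul_const R).eventually_lt_const (by simpa using hε)).and <|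
      ((hr.const_mul (C * R ^ (n + 1))).eventually_lt_const (by simpa using ha)).and
      self_mem_nhdsWithin).exists
  rw [Set.singleton_add] at hyt
  obtain ⟨_, ⟨u, ⟨huR, hua⟩, rfl⟩, rfl⟩ := hyt
  have hr0 : (0 : ℝ) < r := hr_mem
  have hu : ‖u‖ < R := mem_ball_zero_iff.1 huR
  have hdist : ‖r • u‖ ≤ r * R := by
    rw [norm_smul, Real.norm_of_nonneg hr0.le]; gcongr
  have hhom : ‖q fun _ => r • u‖ = r ^ n * ‖q fun _ => u‖ := by
    simp [q.map_smul_univ (fun _ => r) (fun _ => u), norm_smul, abs_of_pos hr0]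
  have hupper : ‖q fun _ => r • u‖ ≤ C * (r * R) ^ (n + 1) := by
    have := hbound (y := x + r • u) (by simpa [dist_eq_norm] using hdist.trans_lt hrε) hys
    simp only [add_sub_cancel_left, norm_pow, norm_norm] at this
    exact this.trans (by gcongr)
  have : r ^ n * a < r ^ n * a := calc
    r ^ n * a < r ^ n * ‖q fun _ => u‖ := by gcongr; exact hua
    _ ≤ C * (r * R) ^ (n + 1) := hhom ▸ hupper
    _ = r ^ n * (C * R ^ (n + 1) * r) := by ring
    _ < r ^ n * a := by gcongr
  exact lt_irrefl _ this

theorem HasFPowerSeriesAt.apply_eq_zero_of_hasDensityOneAt {f : E → F}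
    {p : FormalMultilinearSeries ℝ E F} {x : E} {s : Set E} (hf : HasFPowerSeriesAt f p x)
    (hzero : Set.EqOn f 0 s) (hs : HasDensityOneAt μ s x) (n : ℕ) (y : E) :
    (p n fun _ => y) = 0 := by
  induction n using Nat.strong_induction_on generalizing y with
  | _ k hk =>
  have psum_eq : p.partialSum (k + 1) = fun y => p k fun _ => y := by
    funext z
    refine Finset.sum_eq_single _ (fun b hb hbk => ?_) fun hk => ?_
    · exact hk b ((Finset.mem_range_succ_iff.1 hb).lt_of_ne hbk) z
    · exact absurd (Finset.self_mem_range_succ k) hk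
  have hsub : Tendsto (fun y => y - x) (𝓝[s] x) (𝓝 0) :=
    ((continuous_id.sub continuous_const).tendsto' x 0 (sub_self x)).mono_left nhdsWithin_le_nhds
  have hO := (hf.isBigO_sub_partialSum_pow (k + 1)).comp_tendsto hsub
  refine hs.continuousMultilinearMap_apply_eq_zero (isBigO_neg_left.1 (hO.congr' ?_ .rfl)) y
  filter_upwards [self_mem_nhdsWithin] with z hz
  simp [psum_eq, hzero hz]

theorem HasFPowerSeriesAt.eventuallyEq_zero_of_hasDensityOneAt {f : E → F}
    {p : FormalMultilinearSeries ℝ E F} {x : E} {s : Set E} (hf : HasFPowerSeriesAt f p x)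
    (hzero : Set.EqOn f 0 s) (hs : HasDensityOneAt μ s x) : f =ᶠ[𝓝 x] 0 := by
  filter_upwards [hf.eventually_hasSum_sub] with y hy
  refine hy.unique ?_
  simp only [hf.apply_eq_zero_of_hasDensityOneAt hzero hs]
  exact hasSum_zero

end

theorem analytic_eqOn_zero_of_pos_measure_zeros_general
    (N : ℕ) (Ω : Set (Fin N → ℝ)) (hΩc : IsConnected Ω)
    (g : (Fin N → ℝ) → ℝ) (hg : AnalyticOnNhd ℝ g Ω)
    (s : Set (Fin N → ℝ)) (hs : s ⊆ Ω) (hzero : ∀ x ∈ s, g x = 0)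
    (hpos : 0 < volume s) :
    Set.EqOn g 0 Ω := by
  obtain ⟨x₀, hx₀s, hx₀⟩ := exists_mem_hasDensityOneAt volume hpos.ne'
  obtain ⟨p, hp⟩ := hg x₀ (hs hx₀s)
  exact hg.eqOn_zero_of_preconnected_of_eventuallyEq_zero hΩc.isPreconnected (hs hx₀s)
    (hp.eventuallyEq_zero_of_hasDensityOneAt (fun x hx => hzero x hx) hx₀)

/-- A real-analytic function on a connected open subset of `ℝ^N` vanishing on a
set of positive measure vanishes identically. -/
theorem analytic_eqOn_zero_of_pos_measure_zeros
    (N : ℕ) (Ω : Set (Fin N → ℝ)) (hΩo : IsOpen Ω) (hΩc : IsConnected Ω)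
    (g : (Fin N → ℝ) → ℝ) (hg : AnalyticOnNhd ℝ g Ω)
    (s : Set (Fin N → ℝ)) (hs : s ⊆ Ω) (hzero : ∀ x ∈ s, g x = 0)
    (hpos : 0 < volume s) :
    Set.EqOn g 0 Ω :=
  analytic_eqOn_zero_of_pos_measure_zeros_general N Ω hΩc g hg s hs hzero hpos
end
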